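/- arXiv:1506.05028 — 4 statements merged into one kernel-verified Lean document; each statement's English description precedes it below -/
import Mathlib

section
/- A relation R on a set A satisfying R(a,b) → R(a,a) ∧ R(b,a) for all a,b is positive: there exist a set X and a relation S : A → X → Prop such that R(a,b) ↔ ∃x, S(a,x) ∧ S(b,x) for all a,b. -/
theorem stmt1 {A : Type} (R : A → A → Prop)
    (h : ∀ a b, R a b → R a a ∧ R b a) :
    ∃ (X : Type) (S : A → X → Prop), ∀ a b, R a b ↔ ∃ x, S a x ∧ S b x := by
  refine ⟨A × A, fun a x => R x.1 x.2 ∧ (a = x.1 ∨ a = x.2), fun a b => ⟨fun hab => ?_, ?_⟩⟩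
  · exact ⟨(a, b), ⟨hab, Or.inl rfl⟩, ⟨hab, Or.inr rfl⟩⟩
  · rintro ⟨⟨p, q⟩, ⟨hpq, rfl | rfl⟩, ⟨-, rfl | rfl⟩⟩ <;>
      first
      | exact hpq
      | exact (h _ _ hpq).1
      | exact (h _ _ hpq).2
      | exact (h _ _ (h _ _ hpq).2).1
end

section
/- Let G be a group and B a subgroup of the product group G × G × G such that for all a,a' ∈ G: ((a,1,a') ∈ B ↔ a = a') and ((a,a',1) ∈ B ↔ a = a'). Then G is abelian. -/
theorem stmt10 {G : Type*} [Group G] (B : Subgroup (G × G × G))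
    (h1 : ∀ a a' : G, (a, 1, a') ∈ B ↔ a = a')
    (h2 : ∀ a a' : G, (a, a', 1) ∈ B ↔ a = a') :
    ∀ x y : G, x * y = y * x := by
  intro x y
  have hx : ((x, 1, x) : G × G × G) ∈ B := (h1 x x).mpr rfl
  have hy : ((y, y, 1) : G × G × G) ∈ B := (h2 y y).mpr rfl
  have h3 : ((x * y, y, x) : G × G × G) ∈ B := by
    have := B.mul_mem hx hy
    simpa using this
  have h4 : ((y * x, y, x) : G × G × G) ∈ B := by
    have := B.mul_mem hy hx
    simpa using this
  have h5 := B.mul_mem h3 (B.inv_mem h4)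
  simp [Prod.ext_iff] at h5
  have := (h2 (x * y * (y * x)⁻¹) 1).mp (by simpa using h5)
  group at this ⊢
  exact mul_inv_eq_one.mp (by rw [mul_inv_rev]; group at this ⊢; simpa using this)
end

section
/- Let R : A → B → Prop be a difunctional relation such that R† ∘ R splits as a product: there exist predicates P, P' on A with (∃e, R(a,e) ∧ R(a',e)) ↔ P(a) ∧ P'(a') for all a,a'. Then R itself splits as a product: R(a,b) ↔ (∃b', R(a,b')) ∧ (∃a', R(a',b)) for all a,b. -/
theorem stmt12 {A B : Type*} (R : A → B → Prop)
    (hdif : ∀ a b a' b', R a b → R a' b → R a' b' → R a b')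
    (P P' : A → Prop)
    (hsplit : ∀ a a', (∃ e, R a e ∧ R a' e) ↔ P a ∧ P' a') :
    ∀ a b, R a b ↔ (∃ b', R a b') ∧ (∃ a', R a' b) := by
  intro a b
  constructor
  · exact fun h => ⟨⟨b, h⟩, ⟨a, h⟩⟩
  · rintro ⟨⟨b', hab'⟩, ⟨a', ha'b⟩⟩
    have h1 : P a := ((hsplit a a).mp ⟨b', hab', hab'⟩).1
    have h2 : P' a' := ((hsplit a' a').mp ⟨b, ha'b, ha'b⟩).2
    obtain ⟨e, hae, ha'e⟩ := (hsplit a a').mpr ⟨h1, h2⟩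
    exact hdif a e a' b hae ha'e ha'b
end

section
/- Let G be a group and T : A → G → Prop a relation on a set A such that for all a, a' ∈ A there exists x ∈ G with T(a,x) ∧ T(a',x). If T (viewed as a relation on A × G) is difunctional, then for all a ∈ A and x ∈ G: T(a,x) ↔ ∃a', T(a',x). Hence T splits as A × ψ for ψ = {x | ∃a, T(a,x)}. -/
theorem stmt18 {A : Type*} {G : Type*} [Group G] (T : A → G → Prop)
    (htotal : ∀ a a' : A, ∃ x : G, T a x ∧ T a' x)
    (hdif : ∀ a a' x y, T a x → T a' x → T a' y → T a y) :
    ∀ a x, T a x ↔ ∃ a', T a' x := by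
  intro a x
  constructor
  · exact fun h => ⟨a, h⟩
  · rintro ⟨a', h⟩
    obtain ⟨z, hz, hz'⟩ := htotal a a'
    exact hdif a a' z x hz hz' h
end
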